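/- Let Π be a (not necessarily tight) logic program. Then X ⊆ atom(Π) is an answer set of Π if and only if X = T_A ∩ atom(Π) for some (unique) solution A for Δ_Π ∪ Λ_Π. -/
import Mathlib


/-- Signed literals over a domain `V`. -/
inductive Lit (V : Type) where
  | pos : V → Lit V
  | neg : V → Lit V
deriving DecidableEq

def Lit.var {V : Type} : Lit V → V
  | .pos v => v
  | .neg v => v

/-- A normal rule `head ← pos, not neg`. -/
structure Rule (V : Type) where
  head : V
  pos : Finset V
  neg : Finset V
deriving DecidableEq

variable {V : Type} [DecidableEq V]

/-- A body, identified with its pair of positive and negative atom sets. -/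
abbrev Body (V : Type) := Finset V × Finset V

/-- The domain `atom(Prog) ∪ body(Prog)`: atoms on the left, bodies on the right. -/
abbrev Dom (V : Type) := V ⊕ Body V

def atoms (Prog : Finset (Rule V)) : Finset V :=
  Prog.sup (fun r => insert r.head (r.pos ∪ r.neg))

def bodies (Prog : Finset (Rule V)) : Finset (Body V) :=
  Prog.image (fun r => (r.pos, r.neg))

/-- `body(p)`: the bodies of rules with head `p`. -/
def bodiesOf (Prog : Finset (Rule V)) (p : V) : Finset (Body V) :=
  (Prog.filter (fun r => r.head = p)).image (fun r => (r.pos, r.neg))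

/-- `Y` is closed under the Gelfond–Lifschitz reduct of `Prog` w.r.t. `X`. -/
def ReductClosed (Prog : Finset (Rule V)) (X Y : Set V) : Prop :=
  ∀ r ∈ Prog, ↑r.pos ⊆ Y → (∀ q ∈ r.neg, q ∉ X) → r.head ∈ Y

/-- `X` is an answer set of `Prog`: `X` is the least model of the reduct `Prog^X`. -/
def IsAnswerSet (Prog : Finset (Rule V)) (X : Set V) : Prop :=
  X = ⋂₀ {Y : Set V | ReductClosed Prog X Y}

/-- `Prog` is tight: its positive atom dependency graph is acyclic. -/
def Tight (Prog : Finset (Rule V)) : Prop :=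
  WellFounded (fun q p : V => ∃ r ∈ Prog, r.head = p ∧ q ∈ r.pos)

/-- Completion nogoods `Δ_β` for a body `β`. -/
def Dbody (β : Body V) : Set (Set (Lit (Dom V))) :=
  insert
    ((fun p => Lit.pos (Sum.inl p)) '' ↑β.1 ∪ (fun q => Lit.neg (Sum.inl q)) '' ↑β.2 ∪
      {Lit.neg (Sum.inr β)})
    ({δ | ∃ p ∈ β.1, δ = {Lit.neg (Sum.inl p), Lit.pos (Sum.inr β)}} ∪
     {δ | ∃ q ∈ β.2, δ = {Lit.pos (Sum.inl q), Lit.pos (Sum.inr β)}})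

/-- Completion nogoods `Δ_p` for an atom `p`. -/
def Datom (Prog : Finset (Rule V)) (p : V) : Set (Set (Lit (Dom V))) :=
  insert
    ((fun β => Lit.neg (Sum.inr β)) '' ↑(bodiesOf Prog p) ∪ {Lit.pos (Sum.inl p)})
    {δ | ∃ β ∈ bodiesOf Prog p, δ = {Lit.pos (Sum.inr β), Lit.neg (Sum.inl p)}}

/-- The completion nogoods `Δ_Prog`. -/
def DeltaPi (Prog : Finset (Rule V)) : Set (Set (Lit (Dom V))) :=
  (⋃ β ∈ bodies Prog, Dbody β) ∪ (⋃ p ∈ atoms Prog, Datom Prog p)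

/-- The domain `atom(Prog) ∪ body(Prog)` as a set. -/
def domPi (Prog : Finset (Rule V)) : Set (Dom V) :=
  (Sum.inl '' ↑(atoms Prog)) ∪ (Sum.inr '' ↑(bodies Prog))

def Tass (A : Set (Lit (Dom V))) : Set (Dom V) := {v | Lit.pos v ∈ A}
def Fass (A : Set (Lit (Dom V))) : Set (Dom V) := {v | Lit.neg v ∈ A}

/-- `A` is a total assignment over `dom(Prog) = atom(Prog) ∪ body(Prog)`. -/
def TotalAssign (Prog : Finset (Rule V)) (A : Set (Lit (Dom V))) : Prop :=
  (∀ l ∈ A, Lit.var l ∈ domPi Prog) ∧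
  Tass A ∪ Fass A = domPi Prog ∧ Tass A ∩ Fass A = ∅

/-- `A` is a solution for the set `Δ` of nogoods. -/
def IsSolution (Prog : Finset (Rule V)) (Δ : Set (Set (Lit (Dom V))))
    (A : Set (Lit (Dom V))) : Prop :=
  TotalAssign Prog A ∧ ∀ δ ∈ Δ, ¬ δ ⊆ A

/-- The external bodies `EB(U,Prog)` of a set `U` of atoms. -/
def EB (Prog : Finset (Rule V)) (U : Finset V) : Finset (Body V) :=
  (Prog.filter (fun r => r.head ∈ U ∧ r.pos ∩ U = ∅)).image (fun r => (r.pos, r.neg))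

/-- The loop nogoods `Λ_U` for a set `U` of atoms. -/
def LambdaU (Prog : Finset (Rule V)) (U : Finset V) : Set (Set (Lit (Dom V))) :=
  {δ | ∃ p ∈ U,
    δ = (fun β => Lit.neg (Sum.inr β)) '' ↑(EB Prog U) ∪ {Lit.pos (Sum.inl p)}}

/-- `Λ_Prog`: the loop nogoods of all subsets of `atom(Prog)`. -/
def LambdaPi (Prog : Finset (Rule V)) : Set (Set (Lit (Dom V))) :=
  ⋃ U ∈ (atoms Prog).powerset, LambdaU Prog U


/-! ### Auxiliary machinery -/

section AuxStmt3

open Classical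

variable {Prog : Finset (Rule V)} {A : Set (Lit (Dom V))} {X : Set V}

lemma head_mem_atoms {r : Rule V} (hr : r ∈ Prog) : r.head ∈ atoms Prog :=
  Finset.le_sup (f := fun r : Rule V => insert r.head (r.pos ∪ r.neg)) hr
    (Finset.mem_insert_self _ _)

lemma pos_mem_atoms {r : Rule V} (hr : r ∈ Prog) {p : V} (hp : p ∈ r.pos) :
    p ∈ atoms Prog :=
  Finset.le_sup (f := fun r : Rule V => insert r.head (r.pos ∪ r.neg)) hr
    (Finset.mem_insert_of_mem (Finset.mem_union_left _ hp))

lemma neg_mem_atoms {r : Rule V} (hr : r ∈ Prog) {q : V} (hq : q ∈ r.neg) :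
    q ∈ atoms Prog :=
  Finset.le_sup (f := fun r : Rule V => insert r.head (r.pos ∪ r.neg)) hr
    (Finset.mem_insert_of_mem (Finset.mem_union_right _ hq))

lemma bodiesOf_subset_bodies (Prog : Finset (Rule V)) (p : V) :
    bodiesOf Prog p ⊆ bodies Prog :=
  Finset.image_subset_image (Finset.filter_subset _ _)

lemma EB_subset_bodies (Prog : Finset (Rule V)) (U : Finset V) :
    EB Prog U ⊆ bodies Prog :=
  Finset.image_subset_image (Finset.filter_subset _ _)

lemma body_atoms {β : Body V} (hβ : β ∈ bodies Prog) :
    (∀ p ∈ β.1, p ∈ atoms Prog) ∧ (∀ q ∈ β.2, q ∈ atoms Prog) := by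
  obtain ⟨r, hr, hrβ⟩ := Finset.mem_image.mp hβ
  subst hrβ
  exact ⟨fun p hp => pos_mem_atoms hr hp, fun q hq => neg_mem_atoms hr hq⟩

/-- A body is "good" w.r.t. `X` if all positive atoms are in `X` and no negative one is. -/
def GoodBody (X : Set V) (β : Body V) : Prop :=
  (∀ p ∈ β.1, p ∈ X) ∧ (∀ q ∈ β.2, q ∉ X)

/-- The canonical assignment induced by `X`. -/
def canonA (Prog : Finset (Rule V)) (X : Set V) : Set (Lit (Dom V)) :=
  {l | match l with
    | .pos (.inl p) => p ∈ atoms Prog ∧ p ∈ X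
    | .neg (.inl p) => p ∈ atoms Prog ∧ p ∉ X
    | .pos (.inr β) => β ∈ bodies Prog ∧ GoodBody X β
    | .neg (.inr β) => β ∈ bodies Prog ∧ ¬ GoodBody X β}

lemma canonA_pos_inl {p : V} :
    Lit.pos (Sum.inl p) ∈ canonA Prog X ↔ p ∈ atoms Prog ∧ p ∈ X := Iff.rfl
lemma canonA_neg_inl {p : V} :
    Lit.neg (Sum.inl p) ∈ canonA Prog X ↔ p ∈ atoms Prog ∧ p ∉ X := Iff.rfl
lemma canonA_pos_inr {β : Body V} :
    Lit.pos (Sum.inr β) ∈ canonA Prog X ↔ β ∈ bodies Prog ∧ GoodBody X β := Iff.rfl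
lemma canonA_neg_inr {β : Body V} :
    Lit.neg (Sum.inr β) ∈ canonA Prog X ↔ β ∈ bodies Prog ∧ ¬ GoodBody X β := Iff.rfl

lemma inl_mem_domPi {p : V} : Sum.inl p ∈ domPi Prog ↔ p ∈ atoms Prog := by
  simp [domPi]

lemma inr_mem_domPi {β : Body V} : Sum.inr β ∈ domPi Prog ↔ β ∈ bodies Prog := by
  simp [domPi]

lemma total_pos_iff (hA : TotalAssign Prog A) {v : Dom V} (hv : v ∈ domPi Prog) :
    Lit.pos v ∈ A ↔ Lit.neg v ∉ A := by
  obtain ⟨-, hcov, hdisj⟩ := hA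
  constructor
  · intro h hn
    have : v ∈ Tass A ∩ Fass A := ⟨h, hn⟩
    rw [hdisj] at this; exact this
  · intro hn
    have : v ∈ Tass A ∪ Fass A := by rw [hcov]; exact hv
    rcases this with h | h
    · exact h
    · exact absurd h hn

/-! Nogood membership lemmas -/

lemma ng_body1 {β : Body V} (hβ : β ∈ bodies Prog) :
    ((fun p => Lit.pos (Sum.inl p)) '' ↑β.1 ∪ (fun q => Lit.neg (Sum.inl q)) '' ↑β.2 ∪
      {Lit.neg (Sum.inr β)}) ∈ DeltaPi Prog :=
  Or.inl (Set.mem_biUnion hβ (Set.mem_insert _ _))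

lemma ng_body2 {β : Body V} (hβ : β ∈ bodies Prog) {p : V} (hp : p ∈ β.1) :
    ({Lit.neg (Sum.inl p), Lit.pos (Sum.inr β)} : Set (Lit (Dom V))) ∈ DeltaPi Prog :=
  Or.inl (Set.mem_biUnion hβ (Set.mem_insert_of_mem _ (Or.inl ⟨p, hp, rfl⟩)))

lemma ng_body3 {β : Body V} (hβ : β ∈ bodies Prog) {q : V} (hq : q ∈ β.2) :
    ({Lit.pos (Sum.inl q), Lit.pos (Sum.inr β)} : Set (Lit (Dom V))) ∈ DeltaPi Prog :=
  Or.inl (Set.mem_biUnion hβ (Set.mem_insert_of_mem _ (Or.inr ⟨q, hq, rfl⟩)))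

lemma ng_atom1 {p : V} (hp : p ∈ atoms Prog) :
    ((fun β => Lit.neg (Sum.inr β)) '' ↑(bodiesOf Prog p) ∪ {Lit.pos (Sum.inl p)}) ∈
      DeltaPi Prog :=
  Or.inr (Set.mem_biUnion hp (Set.mem_insert _ _))

lemma ng_atom2 {p : V} (hp : p ∈ atoms Prog) {β : Body V} (hβ : β ∈ bodiesOf Prog p) :
    ({Lit.pos (Sum.inr β), Lit.neg (Sum.inl p)} : Set (Lit (Dom V))) ∈ DeltaPi Prog :=
  Or.inr (Set.mem_biUnion hp (Set.mem_insert_of_mem _ ⟨β, hβ, rfl⟩))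

lemma ng_loop {U : Finset V} (hU : U ⊆ atoms Prog) {p : V} (hp : p ∈ U) :
    ((fun β => Lit.neg (Sum.inr β)) '' ↑(EB Prog U) ∪ {Lit.pos (Sum.inl p)}) ∈
      LambdaPi Prog :=
  Set.mem_biUnion (Finset.mem_powerset.mpr hU) ⟨p, hp, rfl⟩

/-! Semantic consequences for solutions -/

lemma sol_body_pos (hA : IsSolution Prog (DeltaPi Prog ∪ LambdaPi Prog) A)
    {β : Body V} (hβ : β ∈ bodies Prog) (hT : Lit.pos (Sum.inr β) ∈ A) :
    (∀ p ∈ β.1, Lit.pos (Sum.inl p) ∈ A) ∧ (∀ q ∈ β.2, Lit.pos (Sum.inl q) ∉ A) := by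
  constructor
  · intro p hp
    have hng := hA.2 _ (Or.inl (ng_body2 hβ hp))
    have hF : Lit.neg (Sum.inl p) ∉ A := by
      intro hF
      exact hng (by intro l hl; rcases hl with h | h
                    · exact h ▸ hF
                    · exact (Set.mem_singleton_iff.mp h) ▸ hT)
    have hpat : p ∈ atoms Prog := (body_atoms hβ).1 p hp
    exact (total_pos_iff hA.1 (inl_mem_domPi.mpr hpat)).mpr hF
  · intro q hq hTq
    have hng := hA.2 _ (Or.inl (ng_body3 hβ hq))
    exact hng (by intro l hl; rcases hl with h | h
                  · exact h ▸ hTq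
                  · exact (Set.mem_singleton_iff.mp h) ▸ hT)

lemma sol_body_neg (hA : IsSolution Prog (DeltaPi Prog ∪ LambdaPi Prog) A)
    {β : Body V} (hβ : β ∈ bodies Prog)
    (h1 : ∀ p ∈ β.1, Lit.pos (Sum.inl p) ∈ A)
    (h2 : ∀ q ∈ β.2, Lit.pos (Sum.inl q) ∉ A) :
    Lit.pos (Sum.inr β) ∈ A := by
  by_contra hT
  have hF : Lit.neg (Sum.inr β) ∈ A := by
    by_contra hF
    exact hT ((total_pos_iff hA.1 (inr_mem_domPi.mpr hβ)).mpr hF)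
  have hng := hA.2 _ (Or.inl (ng_body1 hβ))
  apply hng
  intro l hl
  rcases hl with (⟨p, hp, rfl⟩ | ⟨q, hq, rfl⟩) | h
  · exact h1 p hp
  · have hqa : q ∈ atoms Prog := (body_atoms hβ).2 q hq
    by_contra hFq
    exact h2 q hq ((total_pos_iff hA.1 (inl_mem_domPi.mpr hqa)).mpr hFq)
  · exact (Set.mem_singleton_iff.mp h) ▸ hF

lemma sol_head (hA : IsSolution Prog (DeltaPi Prog ∪ LambdaPi Prog) A)
    {p : V} (hp : p ∈ atoms Prog) {β : Body V} (hβ : β ∈ bodiesOf Prog p)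
    (hT : Lit.pos (Sum.inr β) ∈ A) : Lit.pos (Sum.inl p) ∈ A := by
  have hng := hA.2 _ (Or.inl (ng_atom2 hp hβ))
  have hF : Lit.neg (Sum.inl p) ∉ A := by
    intro hF
    exact hng (by intro l hl; rcases hl with h | h
                  · exact h ▸ hT
                  · exact (Set.mem_singleton_iff.mp h) ▸ hF)
  exact (total_pos_iff hA.1 (inl_mem_domPi.mpr hp)).mpr hF

lemma sol_support (hA : IsSolution Prog (DeltaPi Prog ∪ LambdaPi Prog) A)
    {p : V} (hp : p ∈ atoms Prog) (hT : Lit.pos (Sum.inl p) ∈ A) :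
    ∃ β ∈ bodiesOf Prog p, Lit.pos (Sum.inr β) ∈ A := by
  by_contra hc
  push_neg at hc
  have hng := hA.2 _ (Or.inl (ng_atom1 hp))
  apply hng
  intro l hl
  rcases hl with ⟨β, hβ, rfl⟩ | h
  · have hβb : β ∈ bodies Prog := bodiesOf_subset_bodies Prog p hβ
    by_contra hFβ
    exact hc β hβ ((total_pos_iff hA.1 (inr_mem_domPi.mpr hβb)).mpr hFβ)
  · exact (Set.mem_singleton_iff.mp h) ▸ hT

lemma sol_loop (hA : IsSolution Prog (DeltaPi Prog ∪ LambdaPi Prog) A)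
    {U : Finset V} (hU : U ⊆ atoms Prog) {p : V} (hp : p ∈ U)
    (hT : Lit.pos (Sum.inl p) ∈ A) :
    ∃ β ∈ EB Prog U, Lit.pos (Sum.inr β) ∈ A := by
  by_contra hc
  push_neg at hc
  have hng := hA.2 _ (Or.inr (ng_loop hU hp))
  apply hng
  intro l hl
  rcases hl with ⟨β, hβ, rfl⟩ | h
  · have hβb : β ∈ bodies Prog := EB_subset_bodies Prog U hβ
    by_contra hFβ
    exact hc β hβ ((total_pos_iff hA.1 (inr_mem_domPi.mpr hβb)).mpr hFβ)
  · exact (Set.mem_singleton_iff.mp h) ▸ hT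

/-! Answer set facts -/

lemma isAnswerSet_closed (h : IsAnswerSet Prog X) : ReductClosed Prog X X := by
  intro r hr hpos hneg
  rw [h]
  intro Y hY
  have hXY : X ⊆ Y := by rw [h]; exact Set.sInter_subset_of_mem hY
  exact hY r hr (hpos.trans hXY) hneg

lemma isAnswerSet_min (h : IsAnswerSet Prog X) {Y : Set V}
    (hY : ReductClosed Prog X Y) : X ⊆ Y := by
  rw [h]; exact Set.sInter_subset_of_mem hY

lemma isAnswerSet_supported (h : IsAnswerSet Prog X) {p : V} (hp : p ∈ X) :
    ∃ r ∈ Prog, r.head = p ∧ ↑r.pos ⊆ X ∧ ∀ q ∈ r.neg, q ∉ X := by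
  by_contra hc
  push_neg at hc
  have hcl : ReductClosed Prog X (X \ {p}) := by
    intro r hr hpos hneg
    have hposX : ↑r.pos ⊆ X := hpos.trans Set.diff_subset
    have hhX : r.head ∈ X := isAnswerSet_closed h r hr hposX hneg
    refine ⟨hhX, fun hhp => ?_⟩
    obtain ⟨q, hq, hqX⟩ := hc r hr (Set.mem_singleton_iff.mp hhp) hposX
    exact hneg q hq hqX
  exact (isAnswerSet_min h hcl hp).2 rfl

end AuxStmt3

section MainStmt3

open Classical

variable {Prog : Finset (Rule V)} {A : Set (Lit (Dom V))} {X : Set V}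

/-- A solution whose atom-true-part is `X` equals the canonical assignment. -/
lemma sol_eq_canon (hA : IsSolution Prog (DeltaPi Prog ∪ LambdaPi Prog) A)
    (hXdef : X = {p : V | p ∈ atoms Prog ∧ Lit.pos (Sum.inl p) ∈ A}) :
    A = canonA Prog X := by
  have hvar := hA.1.1
  have hTat : ∀ p : V, Lit.pos (Sum.inl p) ∈ A ↔ p ∈ atoms Prog ∧ p ∈ X := by
    intro p
    constructor
    · intro h
      have := hvar _ h
      have hpa : p ∈ atoms Prog := inl_mem_domPi.mp this
      exact ⟨hpa, by rw [hXdef]; exact ⟨hpa, h⟩⟩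
    · intro ⟨_, hpX⟩
      rw [hXdef] at hpX; exact hpX.2
  have hTbod : ∀ β : Body V,
      Lit.pos (Sum.inr β) ∈ A ↔ β ∈ bodies Prog ∧ GoodBody X β := by
    intro β
    constructor
    · intro h
      have hβb : β ∈ bodies Prog := inr_mem_domPi.mp (hvar _ h)
      obtain ⟨h1, h2⟩ := sol_body_pos hA hβb h
      refine ⟨hβb, fun p hp => ((hTat p).mp (h1 p hp)).2, fun q hq hqX => ?_⟩
      rw [hXdef] at hqX
      exact h2 q hq hqX.2
    · intro ⟨hβb, hg⟩
      refine sol_body_neg hA hβb (fun p hp => ?_) (fun q hq hTq => ?_)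
      · exact (hTat p).mpr ⟨(body_atoms hβb).1 p hp, hg.1 p hp⟩
      · exact hg.2 q hq ((hTat q).mp hTq).2
  ext l
  match l with
  | .pos (.inl p) => exact (hTat p).trans canonA_pos_inl.symm
  | .neg (.inl p) =>
    rw [canonA_neg_inl]
    constructor
    · intro h
      have hpa : p ∈ atoms Prog := inl_mem_domPi.mp (hvar _ h)
      refine ⟨hpa, fun hpX => ?_⟩
      have := (total_pos_iff hA.1 (inl_mem_domPi.mpr hpa)).mpr
      have hT : Lit.pos (Sum.inl p) ∈ A := (hTat p).mpr ⟨hpa, hpX⟩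
      exact (total_pos_iff hA.1 (inl_mem_domPi.mpr hpa)).mp hT h
    · intro ⟨hpa, hpX⟩
      by_contra hF
      exact hpX ((hTat p).mp ((total_pos_iff hA.1 (inl_mem_domPi.mpr hpa)).mpr hF)).2
  | .pos (.inr β) => exact (hTbod β).trans canonA_pos_inr.symm
  | .neg (.inr β) =>
    rw [canonA_neg_inr]
    constructor
    · intro h
      have hβb : β ∈ bodies Prog := inr_mem_domPi.mp (hvar _ h)
      refine ⟨hβb, fun hg => ?_⟩
      have hT : Lit.pos (Sum.inr β) ∈ A := (hTbod β).mpr ⟨hβb, hg⟩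
      exact (total_pos_iff hA.1 (inr_mem_domPi.mpr hβb)).mp hT h
    · intro ⟨hβb, hg⟩
      by_contra hF
      exact hg ((hTbod β).mp ((total_pos_iff hA.1 (inr_mem_domPi.mpr hβb)).mpr hF)).2

/-- Backward direction: a solution induces an answer set. -/
lemma solution_isAnswerSet (hA : IsSolution Prog (DeltaPi Prog ∪ LambdaPi Prog) A)
    (hXdef : X = {p : V | p ∈ atoms Prog ∧ Lit.pos (Sum.inl p) ∈ A}) :
    IsAnswerSet Prog X := by
  have hXT : ∀ p ∈ X, Lit.pos (Sum.inl p) ∈ A := by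
    intro p hp; rw [hXdef] at hp; exact hp.2
  have hTX : ∀ p, p ∈ atoms Prog → Lit.pos (Sum.inl p) ∈ A → p ∈ X := by
    intro p hpa hT; rw [hXdef]; exact ⟨hpa, hT⟩
  have hclosed : ReductClosed Prog X X := by
    intro r hr hpos hneg
    have hβb : (r.pos, r.neg) ∈ bodies Prog := Finset.mem_image_of_mem _ hr
    have hT : Lit.pos (Sum.inr (r.pos, r.neg)) ∈ A := by
      refine sol_body_neg hA hβb (fun p hp => hXT p (hpos hp)) (fun q hq hTq => ?_)
      have hqa : q ∈ atoms Prog := neg_mem_atoms hr hq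
      exact hneg q hq (hTX q hqa hTq)
    have hβof : (r.pos, r.neg) ∈ bodiesOf Prog r.head :=
      Finset.mem_image_of_mem _ (Finset.mem_filter.mpr ⟨hr, rfl⟩)
    exact hTX r.head (head_mem_atoms hr) (sol_head hA (head_mem_atoms hr) hβof hT)
  have hmin : ∀ Y : Set V, ReductClosed Prog X Y → X ⊆ Y := by
    intro Y hY p hpX
    by_contra hpY
    have hpa : p ∈ atoms Prog := by rw [hXdef] at hpX; exact hpX.1
    set U : Finset V := (atoms Prog).filter (fun q => q ∈ X ∧ q ∉ Y) with hUdef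
    have hUsub : U ⊆ atoms Prog := Finset.filter_subset _ _
    have hpU : p ∈ U := Finset.mem_filter.mpr ⟨hpa, hpX, hpY⟩
    obtain ⟨β, hβEB, hTβ⟩ := sol_loop hA hUsub hpU (hXT p hpX)
    obtain ⟨r, hrf, hrβ⟩ := Finset.mem_image.mp hβEB
    have hrf' := Finset.mem_filter.mp hrf
    obtain ⟨hr, hhU, hposU⟩ : r ∈ Prog ∧ r.head ∈ U ∧ r.pos ∩ U = ∅ :=
      ⟨hrf'.1, hrf'.2.1, hrf'.2.2⟩
    subst hrβ
    have hβb : (r.pos, r.neg) ∈ bodies Prog := Finset.mem_image_of_mem _ hr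
    obtain ⟨h1, h2⟩ := sol_body_pos hA hβb hTβ
    have hposY : ↑r.pos ⊆ Y := by
      intro q hq
      have hqF : q ∈ r.pos := hq
      have hqX : q ∈ X := hTX q (pos_mem_atoms hr hqF) (h1 q hqF)
      have hqU : q ∉ U := by
        intro hqU
        have : q ∈ r.pos ∩ U := Finset.mem_inter.mpr ⟨hqF, hqU⟩
        rw [hposU] at this
        exact absurd this (Finset.notMem_empty q)
      by_contra hqY
      exact hqU (Finset.mem_filter.mpr ⟨pos_mem_atoms hr hqF, hqX, hqY⟩)
    have hnegX : ∀ q ∈ r.neg, q ∉ X := by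
      intro q hq hqX
      exact h2 q hq (hXT q hqX)
    have : r.head ∈ Y := hY r hr hposY hnegX
    exact (Finset.mem_filter.mp hhU).2.2 this
  apply Set.Subset.antisymm
  · intro p hp Y hY
    exact hmin Y hY hp
  · exact Set.sInter_subset_of_mem hclosed

end MainStmt3

section FwdStmt3

open Classical

variable {Prog : Finset (Rule V)} {X : Set V}

lemma canonA_total (hXat : X ⊆ ↑(atoms Prog)) : TotalAssign Prog (canonA Prog X) := by
  refine ⟨?_, ?_, ?_⟩
  · intro l hl
    match l with
    | .pos (.inl p) => exact inl_mem_domPi.mpr hl.1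
    | .neg (.inl p) => exact inl_mem_domPi.mpr hl.1
    | .pos (.inr β) => exact inr_mem_domPi.mpr hl.1
    | .neg (.inr β) => exact inr_mem_domPi.mpr hl.1
  · ext v
    constructor
    · rintro (h | h)
      · match v with
        | .inl p => exact inl_mem_domPi.mpr h.1
        | .inr β => exact inr_mem_domPi.mpr h.1
      · match v with
        | .inl p => exact inl_mem_domPi.mpr h.1
        | .inr β => exact inr_mem_domPi.mpr h.1
    · intro hv
      match v with
      | .inl p =>
        have hpa : p ∈ atoms Prog := inl_mem_domPi.mp hv
        by_cases hpX : p ∈ X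
        · exact Or.inl ⟨hpa, hpX⟩
        · exact Or.inr ⟨hpa, hpX⟩
      | .inr β =>
        have hβb : β ∈ bodies Prog := inr_mem_domPi.mp hv
        by_cases hg : GoodBody X β
        · exact Or.inl ⟨hβb, hg⟩
        · exact Or.inr ⟨hβb, hg⟩
  · ext v
    simp only [Set.mem_inter_iff, Set.mem_empty_iff_false, iff_false, not_and]
    intro hT hF
    match v with
    | .inl p => exact hF.2 hT.2
    | .inr β => exact hF.2 hT.2

lemma canonA_solution (h : IsAnswerSet Prog X) (hXat : X ⊆ ↑(atoms Prog)) :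
    IsSolution Prog (DeltaPi Prog ∪ LambdaPi Prog) (canonA Prog X) := by
  refine ⟨canonA_total hXat, ?_⟩
  rintro δ (hδ | hδ) hsub
  · -- completion nogoods
    rcases hδ with hδ | hδ
    · -- body nogoods
      rw [Set.mem_iUnion₂] at hδ
      obtain ⟨β, hβb, hδ⟩ := hδ
      rcases hδ with rfl | (⟨p, hp, rfl⟩ | ⟨q, hq, rfl⟩)
      · -- first nogood of Dbody
        have hFβ : Lit.neg (Sum.inr β) ∈ canonA Prog X :=
          hsub (Or.inr (Set.mem_singleton _))
        apply hFβ.2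
        constructor
        · intro p hp
          have : Lit.pos (Sum.inl p) ∈ canonA Prog X :=
            hsub (Or.inl (Or.inl ⟨p, hp, rfl⟩))
          exact this.2
        · intro q hq
          have : Lit.neg (Sum.inl q) ∈ canonA Prog X :=
            hsub (Or.inl (Or.inr ⟨q, hq, rfl⟩))
          exact this.2
      · -- {F p, T β}
        have hFp : Lit.neg (Sum.inl p) ∈ canonA Prog X :=
          hsub (Set.mem_insert _ _)
        have hTβ : Lit.pos (Sum.inr β) ∈ canonA Prog X :=
          hsub (Set.mem_insert_of_mem _ (Set.mem_singleton _))
        exact hFp.2 (hTβ.2.1 p hp)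
      · -- {T q, T β}
        have hTq : Lit.pos (Sum.inl q) ∈ canonA Prog X :=
          hsub (Set.mem_insert _ _)
        have hTβ : Lit.pos (Sum.inr β) ∈ canonA Prog X :=
          hsub (Set.mem_insert_of_mem _ (Set.mem_singleton _))
        exact hTβ.2.2 q hq hTq.2
    · -- atom nogoods
      rw [Set.mem_iUnion₂] at hδ
      obtain ⟨p, hpa, hδ⟩ := hδ
      rcases hδ with rfl | ⟨β, hβ, rfl⟩
      · -- support nogood
        have hTp : Lit.pos (Sum.inl p) ∈ canonA Prog X :=
          hsub (Or.inr (Set.mem_singleton _))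
        obtain ⟨r, hr, rfl, hpos, hneg⟩ := isAnswerSet_supported h hTp.2
        have hβof : (r.pos, r.neg) ∈ bodiesOf Prog r.head :=
          Finset.mem_image_of_mem _ (Finset.mem_filter.mpr ⟨hr, rfl⟩)
        have hFβ : Lit.neg (Sum.inr (r.pos, r.neg)) ∈ canonA Prog X :=
          hsub (Or.inl ⟨(r.pos, r.neg), hβof, rfl⟩)
        exact hFβ.2 ⟨fun q hq => hpos hq, hneg⟩
      · -- {T β, F p}
        have hTβ : Lit.pos (Sum.inr β) ∈ canonA Prog X :=
          hsub (Set.mem_insert _ _)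
        have hFp : Lit.neg (Sum.inl p) ∈ canonA Prog X :=
          hsub (Set.mem_insert_of_mem _ (Set.mem_singleton _))
        obtain ⟨r, hrf, hrβ⟩ := Finset.mem_image.mp hβ
        have hrf' := Finset.mem_filter.mp hrf
        apply hFp.2
        have hhead : r.head ∈ X := by
          apply isAnswerSet_closed h r hrf'.1
          · intro q hq
            exact hTβ.2.1 q (by rw [← hrβ]; exact hq)
          · intro q hq
            exact hTβ.2.2 q (by rw [← hrβ]; exact hq)
        rw [← hrf'.2]; exact hhead
  · -- loop nogoods
    rw [LambdaPi, Set.mem_iUnion₂] at hδ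
    obtain ⟨U, hU, p, hpU, rfl⟩ := hδ
    have hUsub : U ⊆ atoms Prog := Finset.mem_powerset.mp hU
    have hTp : Lit.pos (Sum.inl p) ∈ canonA Prog X :=
      hsub (Or.inr (Set.mem_singleton _))
    have hY : ReductClosed Prog X (X \ ↑U) := by
      intro r hr hpos hneg
      have hposX : ↑r.pos ⊆ X := hpos.trans Set.diff_subset
      have hhX : r.head ∈ X := isAnswerSet_closed h r hr hposX hneg
      refine ⟨hhX, fun hhU => ?_⟩
      have hposU : r.pos ∩ U = ∅ := by
        rw [Finset.eq_empty_iff_forall_notMem]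
        intro q hq
        have hq' := Finset.mem_inter.mp hq
        exact (hpos hq'.1).2 hq'.2
      have hβEB : (r.pos, r.neg) ∈ EB Prog U :=
        Finset.mem_image_of_mem _ (Finset.mem_filter.mpr ⟨hr, hhU, hposU⟩)
      have hFβ : Lit.neg (Sum.inr (r.pos, r.neg)) ∈ canonA Prog X :=
        hsub (Or.inl ⟨(r.pos, r.neg), hβEB, rfl⟩)
      exact hFβ.2 ⟨fun q hq => hposX hq, hneg⟩
    have := isAnswerSet_min h hY hTp.2
    exact this.2 hpU

end FwdStmt3

/-- for an arbitrary program `Prog`, `X ⊆ atom(Prog)` is an answer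
set of `Prog` iff `X = T_A ∩ atom(Prog)` for a (unique) solution `A` of
`Δ_Prog ∪ Λ_Prog`. -/
theorem stmt3 (Prog : Finset (Rule V))
    (X : Set V) (hX : X ⊆ ↑(atoms Prog)) :
    IsAnswerSet Prog X ↔
      ∃! A : Set (Lit (Dom V)), IsSolution Prog (DeltaPi Prog ∪ LambdaPi Prog) A ∧
        X = {p : V | p ∈ atoms Prog ∧ Lit.pos (Sum.inl p) ∈ A} := by
  constructor
  · intro h
    refine ⟨canonA Prog X, ⟨canonA_solution h hX, ?_⟩, ?_⟩
    · ext p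
      simp only [Set.mem_setOf_eq, canonA_pos_inl]
      constructor
      · intro hp
        have hpa : p ∈ atoms Prog := hX hp
        exact ⟨hpa, hpa, hp⟩
      · intro hp; exact hp.2.2
    · rintro A ⟨hAsol, hAX⟩
      exact sol_eq_canon hAsol hAX
  · rintro ⟨A, ⟨hAsol, hAX⟩, -⟩
    exact solution_isAnswerSet hAsol hAX
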